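/- Let n ≥ 2, let q be a nonzero complex number that is not a root of unity, let a be an integer with 0 ≤ a ≤ ⌊n/2⌋ − 2, and set t = q^{2a}. Let λ and μ be Young diagrams with |λ| ≤ n, |μ| ≤ n and |λ| ≡ |μ| ≡ n (mod 2), and write ν = λ ⊓ μ for their intersection. Then W(λ,q,t) = W(μ,q,t) if and only if both of the following hold: for every integer i with m_{λ/ν}(i) > 0 there exists an integer j with m_{λ/ν}(j) = m_{λ/ν}(i) and (t·q^{2i})·(t·q^{2j}) = 1, and for every integer i with m_{μ/ν}(i) > 0 there exists an integer j with m_{μ/ν}(j) = m_{μ/ν}(i) and (t·q^{2i})·(t·q^{2j}) = 1. -/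

import Mathlib

noncomputable section

/-- The content of a cell `(i, j)` of a Young diagram: `j - i`. -/
def cellContent (c : ℕ × ℕ) : ℤ := (c.2 : ℤ) - (c.1 : ℤ)

/-- `diagCount lam d` is `m_λ(d)`, the number of cells of `lam` of content `d`. -/
def diagCount (lam : YoungDiagram) (d : ℤ) : ℕ :=
  (lam.cells.filter (fun c => cellContent c = d)).card

/-- `skewDiagCount lam mu d` is `m_{λ/μ}(d)`, the number of cells of `λ\μ` of content `d`. -/
def skewDiagCount (lam mu : YoungDiagram) (d : ℤ) : ℕ :=
  ((lam.cells \ mu.cells).filter (fun c => cellContent c = d)).card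

/-- The rational function
`W(λ,q,t) = ∏_{c∈λ}(1 − t⁻¹q^{−2·ct(c)}T) / ∏_{c∈λ}(1 − t·q^{2·ct(c)}T) ∈ RatFunc ℂ`. -/
def WFun (q t : ℂˣ) (lam : YoungDiagram) : RatFunc ℂ :=
  (∏ c ∈ lam.cells,
      (1 - RatFunc.C ((t : ℂ)⁻¹ * (q : ℂ) ^ (-2 * cellContent c)) * RatFunc.X)) /
  (∏ c ∈ lam.cells,
      (1 - RatFunc.C ((t : ℂ) * (q : ℂ) ^ (2 * cellContent c)) * RatFunc.X))

/-- The skew analogue `W(λ/μ,q,t)`, a product over the cells of `λ\μ`. -/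
def WSkew (q t : ℂˣ) (lam mu : YoungDiagram) : RatFunc ℂ :=
  (∏ c ∈ lam.cells \ mu.cells,
      (1 - RatFunc.C ((t : ℂ)⁻¹ * (q : ℂ) ^ (-2 * cellContent c)) * RatFunc.X)) /
  (∏ c ∈ lam.cells \ mu.cells,
      (1 - RatFunc.C ((t : ℂ) * (q : ℂ) ^ (2 * cellContent c)) * RatFunc.X))

/-! With `x_d = t q^{2d}` and `t = q^{2a}`, one has `x_d⁻¹ = x_{σ d}` for the reflection
`σ d = -2a - d`, and `d ↦ x_d` is injective because `q` is not a root of unity. `W(λ)` is a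
quotient of products of factors `1 - x T`, and such a product determines its multiset of roots,
so `W(λ) = W(μ)` becomes the multiset identity `σ C_λ + C_μ = σ C_μ + C_λ` on content
multisets, from which the common part `λ ⊓ μ` cancels. No diagonal meets both `λ/ν` and `μ/ν`,
and for disjoint multisets `A, B` the identity `σ A + B = σ B + A` holds iff `σ A = A` and
`σ B = B`; `σ`-invariance of the contents of a skew shape is exactly the pairing condition. -/

open Polynomial

section OneSubMulX

variable {K : Type*} [Field K]

def prodOneSubMulX (s : Multiset Kˣ) : K[X] :=
  (s.map fun u : Kˣ => 1 - C (u : K) * X).prod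

lemma prodOneSubMulX_add (s s' : Multiset Kˣ) :
    prodOneSubMulX (s + s') = prodOneSubMulX s * prodOneSubMulX s' := by
  rw [prodOneSubMulX, Multiset.map_add, Multiset.prod_add]; rfl

lemma one_sub_C_mul_X_eq (u : Kˣ) :
    1 - C (u : K) * X = C (-(u : K)) * (X - C ((u⁻¹ : Kˣ) : K)) := by
  rw [mul_sub, ← C_mul, neg_mul, Units.mul_inv]
  simp only [map_neg, map_one]
  ring

lemma one_sub_C_mul_X_ne_zero (u : Kˣ) : 1 - C (u : K) * X ≠ 0 := by
  rw [one_sub_C_mul_X_eq]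
  exact mul_ne_zero (C_ne_zero.mpr (neg_ne_zero.mpr u.ne_zero)) (X_sub_C_ne_zero _)

lemma roots_one_sub_C_mul_X (u : Kˣ) : (1 - C (u : K) * X).roots = {((u⁻¹ : Kˣ) : K)} := by
  rw [one_sub_C_mul_X_eq, roots_C_mul _ (neg_ne_zero.mpr u.ne_zero), roots_X_sub_C]

lemma zero_notMem_map_one_sub_C_mul_X (s : Multiset Kˣ) :
    (0 : K[X]) ∉ s.map fun u : Kˣ => 1 - C (u : K) * X := fun h => by
  obtain ⟨u, -, hu⟩ := Multiset.mem_map.mp h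
  exact one_sub_C_mul_X_ne_zero u hu

lemma prodOneSubMulX_ne_zero (s : Multiset Kˣ) : prodOneSubMulX s ≠ 0 :=
  Multiset.prod_ne_zero (zero_notMem_map_one_sub_C_mul_X s)

lemma roots_prodOneSubMulX (s : Multiset Kˣ) :
    (prodOneSubMulX s).roots = s.map fun u => ((u⁻¹ : Kˣ) : K) := by
  rw [prodOneSubMulX, roots_multiset_prod _ (zero_notMem_map_one_sub_C_mul_X s),
    Multiset.bind_map]
  simp only [roots_one_sub_C_mul_X, Multiset.bind_singleton]

lemma prodOneSubMulX_injective : Function.Injective (prodOneSubMulX (K := K)) := fun s s' h => by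
  have hroots := congrArg Polynomial.roots h
  rw [roots_prodOneSubMulX, roots_prodOneSubMulX] at hroots
  exact Multiset.map_injective (Units.val_injective.comp inv_injective) hroots

lemma ratFunc_div_prodOneSubMulX_eq_iff {a b c d : Multiset Kˣ} :
    algebraMap K[X] (RatFunc K) (prodOneSubMulX a) /
          algebraMap K[X] (RatFunc K) (prodOneSubMulX b) =
        algebraMap K[X] (RatFunc K) (prodOneSubMulX c) /
          algebraMap K[X] (RatFunc K) (prodOneSubMulX d) ↔
      a + d = c + b := by
  rw [div_eq_div_iff (RatFunc.algebraMap_ne_zero (prodOneSubMulX_ne_zero b))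
      (RatFunc.algebraMap_ne_zero (prodOneSubMulX_ne_zero d)),
    ← map_mul, ← map_mul, (RatFunc.algebraMap_injective K).eq_iff,
    ← prodOneSubMulX_add, ← prodOneSubMulX_add, prodOneSubMulX_injective.eq_iff]

end OneSubMulX

namespace Multiset

variable {α : Type*} [DecidableEq α] {σ : α → α}

lemma count_map_of_involutive (hσ : Function.Involutive σ) (s : Multiset α) (a : α) :
    (s.map σ).count a = s.count (σ a) := by
  rw [← count_map_eq_count' σ s hσ.injective, hσ]

lemma map_eq_self_iff_of_involutive (hσ : Function.Involutive σ) {s : Multiset α} :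
    s.map σ = s ↔ ∀ a, 0 < s.count a → s.count (σ a) = s.count a := by
  simp only [Multiset.ext, count_map_of_involutive hσ]
  refine ⟨fun h a _ => h a, fun h a => ?_⟩
  rcases Nat.eq_zero_or_pos (s.count a) with ha | ha
  · rcases Nat.eq_zero_or_pos (s.count (σ a)) with hσa | hσa
    · rw [ha, hσa]
    · have := h (σ a) hσa
      rw [hσ] at this
      omega
  · exact h a ha

lemma count_eq_zero_or_of_disjoint {s t : Multiset α} (hst : Disjoint s t) (a : α) :
    s.count a = 0 ∨ t.count a = 0 := by
  have h := congrArg (count a) (inter_eq_zero_iff_disjoint.mpr hst)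
  rw [count_inter, count_zero] at h
  omega

lemma map_add_eq_map_add_iff_of_disjoint (hσ : Function.Involutive σ) {s t : Multiset α}
    (hst : Disjoint s t) : s.map σ + t = t.map σ + s ↔ s.map σ = s ∧ t.map σ = t := by
  refine ⟨fun h => ?_, fun ⟨hs, ht⟩ => by rw [hs, ht, add_comm]⟩
  have hcount a : s.count (σ a) + t.count a = t.count (σ a) + s.count a := by
    simpa only [count_add, count_map_of_involutive hσ] using congrArg (count a) h
  simp only [Multiset.ext, count_map_of_involutive hσ]
  constructor <;> intro a <;>
    have := hcount a <;>
    rcases count_eq_zero_or_of_disjoint hst a with ha | ha <;>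
    rcases count_eq_zero_or_of_disjoint hst (σ a) with hσa | hσa <;> omega

end Multiset

def cellContents (S : Finset (ℕ × ℕ)) : Multiset ℤ := S.val.map cellContent

lemma cellContents_sdiff_add {S T : Finset (ℕ × ℕ)} (h : T ⊆ S) :
    cellContents (S \ T) + cellContents T = cellContents S := by
  rw [cellContents, cellContents, cellContents, ← Multiset.map_add, Finset.sdiff_val,
    tsub_add_cancel_of_le (Finset.val_le_iff.mpr h)]

lemma skewDiagCount_eq_count (lam mu : YoungDiagram) (d : ℤ) :
    skewDiagCount lam mu d = (cellContents (lam.cells \ mu.cells)).count d := by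
  simp only [skewDiagCount, cellContents, Multiset.count_map, Finset.card_def, Finset.filter_val,
    eq_comm]

lemma YoungDiagram.mem_of_cellContent_eq {μ : YoungDiagram} {c c' : ℕ × ℕ} (hc' : c' ∈ μ)
    (h1 : c.1 ≤ c'.1) (hct : cellContent c = cellContent c') : c ∈ μ :=
  μ.up_left_mem h1 (by unfold cellContent at hct; omega) hc'

lemma disjoint_cellContents_sdiff_inf (lam mu : YoungDiagram) :
    Disjoint (cellContents (lam.cells \ (lam ⊓ mu).cells))
      (cellContents (mu.cells \ (lam ⊓ mu).cells)) := by
  simp only [Multiset.disjoint_left, cellContents, Multiset.mem_map, Finset.mem_val,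
    Finset.mem_sdiff, YoungDiagram.mem_cells, YoungDiagram.mem_inf]
  rintro _ ⟨c, ⟨hcl, hcν⟩, rfl⟩ ⟨c', ⟨hc'm, hc'ν⟩, hct⟩
  rcases le_total c.1 c'.1 with h | h
  · exact hcν ⟨hcl, YoungDiagram.mem_of_cellContent_eq hc'm h hct.symm⟩
  · exact hc'ν ⟨YoungDiagram.mem_of_cellContent_eq hcl h hct, hc'm⟩

section CellParam

variable {G : Type*}

def cellParam [Group G] (q t : G) (d : ℤ) : G := t * q ^ (2 * d)

lemma cellParam_injective [Group G] {q : G} (hq : Function.Injective (q ^ · : ℤ → G)) (t : G) :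
    Function.Injective (cellParam q t) := fun i j h => by
  have := hq (mul_left_cancel h)
  omega

lemma cellParam_mul_cellParam_eq_one_iff [CommGroup G] {q t : G}
    (hq : Function.Injective (q ^ · : ℤ → G)) {a : ℤ} (ht : t = q ^ (2 * a)) (i j : ℤ) :
    cellParam q t i * cellParam q t j = 1 ↔ j = -(2 * a) - i := by
  rw [cellParam, cellParam, ht, ← zpow_add, ← zpow_add, ← zpow_add, ← zpow_zero q, hq.eq_iff]
  omega

end CellParam

lemma WFun_eq_div (q t : ℂˣ) (lam : YoungDiagram) :
    WFun q t lam =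
      algebraMap ℂ[X] (RatFunc ℂ)
          (prodOneSubMulX ((cellContents lam.cells).map fun d => (cellParam q t d)⁻¹)) /
        algebraMap ℂ[X] (RatFunc ℂ)
          (prodOneSubMulX ((cellContents lam.cells).map (cellParam q t))) := by
  simp only [WFun, prodOneSubMulX, cellContents, Multiset.map_map, map_multiset_prod,
    Finset.prod_eq_multiset_prod]
  congr 2 <;> refine Multiset.map_congr rfl fun c _ => ?_ <;>
    simp only [Function.comp_apply, map_sub, map_one, map_mul, RatFunc.algebraMap_C,
      RatFunc.algebraMap_X, cellParam, Units.val_inv_eq_inv_val, Units.val_mul,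
      Units.val_zpow_eq_zpow_val, mul_inv, neg_mul, zpow_neg]

lemma WFun_eq_WFun_iff {q t : ℂˣ} {σ : ℤ → ℤ} (hinj : Function.Injective (cellParam q t))
    (hσ : ∀ d, (cellParam q t d)⁻¹ = cellParam q t (σ d)) (lam mu : YoungDiagram) :
    WFun q t lam = WFun q t mu ↔
      (cellContents (lam.cells \ (lam ⊓ mu).cells)).map σ +
          cellContents (mu.cells \ (lam ⊓ mu).cells) =
        (cellContents (mu.cells \ (lam ⊓ mu).cells)).map σ +
          cellContents (lam.cells \ (lam ⊓ mu).cells) := by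
  have hinv (s : Multiset ℤ) :
      (s.map fun d => (cellParam q t d)⁻¹) = (s.map σ).map (cellParam q t) := by
    rw [Multiset.map_map]
    exact Multiset.map_congr rfl fun d _ => hσ d
  rw [WFun_eq_div, WFun_eq_div, hinv, hinv, ratFunc_div_prodOneSubMulX_eq_iff,
    ← Multiset.map_add, ← Multiset.map_add, (Multiset.map_injective hinj).eq_iff,
    ← cellContents_sdiff_add (YoungDiagram.cells_subset_iff.mpr (inf_le_left : lam ⊓ mu ≤ lam)),
    ← cellContents_sdiff_add (YoungDiagram.cells_subset_iff.mpr (inf_le_right : lam ⊓ mu ≤ mu))]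
  simp only [Multiset.map_add, add_add_add_comm _ (Multiset.map σ (cellContents _)), add_left_inj]

theorem WFun_eq_iff_both_skews_paired_general
    (q : ℂˣ) (hq : ∀ k : ℕ, 0 < k → q ^ k ≠ 1)
    (a : ℤ)
    (t : ℂˣ) (ht : t = q ^ (2 * a))
    (lam mu : YoungDiagram) :
    WFun q t lam = WFun q t mu ↔
      ((∀ i : ℤ, 0 < skewDiagCount lam (lam ⊓ mu) i →
        ∃ j : ℤ, skewDiagCount lam (lam ⊓ mu) j = skewDiagCount lam (lam ⊓ mu) i ∧
          (t * q ^ (2 * i)) * (t * q ^ (2 * j)) = 1) ∧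
       (∀ i : ℤ, 0 < skewDiagCount mu (lam ⊓ mu) i →
        ∃ j : ℤ, skewDiagCount mu (lam ⊓ mu) j = skewDiagCount mu (lam ⊓ mu) i ∧
          (t * q ^ (2 * i)) * (t * q ^ (2 * j)) = 1)) := by
  have hqinj : Function.Injective (q ^ · : ℤ → ℂˣ) :=
    injective_zpow_iff_not_isOfFinOrder.mpr fun h => by
      obtain ⟨k, hk, hqk⟩ := isOfFinOrder_iff_pow_eq_one.mp h
      exact hq k hk hqk
  set σ : ℤ → ℤ := fun d => -(2 * a) - d
  have hσ : Function.Involutive σ := fun d => sub_sub_cancel _ d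
  have hpaired (i j : ℤ) : (t * q ^ (2 * i)) * (t * q ^ (2 * j)) = 1 ↔ j = σ i :=
    cellParam_mul_cellParam_eq_one_iff hqinj ht i j
  have hcond (s : Multiset ℤ) : (∀ i, 0 < s.count i →
      ∃ j, s.count j = s.count i ∧ (t * q ^ (2 * i)) * (t * q ^ (2 * j)) = 1) ↔ s.map σ = s := by
    simp only [hpaired, exists_eq_right, Multiset.map_eq_self_iff_of_involutive hσ]
  rw [WFun_eq_WFun_iff (cellParam_injective hqinj t)
      (fun d => inv_eq_of_mul_eq_one_right ((hpaired d _).mpr rfl)),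
    Multiset.map_add_eq_map_add_iff_of_disjoint hσ (disjoint_cellContents_sdiff_inf lam mu)]
  simp only [skewDiagCount_eq_count, hcond]

/-- Let `n ≥ 2`, `q` not a root of unity, `0 ≤ a ≤ ⌊n/2⌋ − 2` and
`t = q^(2a)`. For Young diagrams `λ, μ` with at most `n` cells, `|λ| ≡ |μ| ≡ n (mod 2)`,
and `ν = λ ⊓ μ`, one has `W(λ,q,t) = W(μ,q,t)` iff every diagonal of `λ/ν` is
`(q,t)`-paired with a diagonal of `λ/ν` of the same length, and likewise for `μ/ν`. -/
theorem WFun_eq_iff_both_skews_paired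
    (n : ℕ) (hn : 2 ≤ n)
    (q : ℂˣ) (hq : ∀ k : ℕ, 0 < k → q ^ k ≠ 1)
    (a : ℤ) (ha0 : 0 ≤ a) (ha1 : a ≤ ((n / 2 : ℕ) : ℤ) - 2)
    (t : ℂˣ) (ht : t = q ^ (2 * a))
    (lam mu : YoungDiagram)
    (hlam : lam.card ≤ n) (hmu : mu.card ≤ n)
    (hlpar : lam.card ≡ n [MOD 2]) (hmpar : mu.card ≡ n [MOD 2]) :
    WFun q t lam = WFun q t mu ↔
      ((∀ i : ℤ, 0 < skewDiagCount lam (lam ⊓ mu) i →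
        ∃ j : ℤ, skewDiagCount lam (lam ⊓ mu) j = skewDiagCount lam (lam ⊓ mu) i ∧
          (t * q ^ (2 * i)) * (t * q ^ (2 * j)) = 1) ∧
       (∀ i : ℤ, 0 < skewDiagCount mu (lam ⊓ mu) i →
        ∃ j : ℤ, skewDiagCount mu (lam ⊓ mu) j = skewDiagCount mu (lam ⊓ mu) i ∧
          (t * q ^ (2 * i)) * (t * q ^ (2 * j)) = 1)) :=
  WFun_eq_iff_both_skews_paired_general q hq a t ht lam mu
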